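/- Let 𝒯 be a monoid of transformations of a nonempty set X, let 𝒟 be a 𝒯-invariant lattice of subsets of X (closed under finite unions and finite intersections, containing ∅ and X, and with T⁻¹(B) ∈ 𝒟 for all B ∈ 𝒟 and T ∈ 𝒯), and let P : 𝒟 → ℝ be monotone (B ⊆ C implies P(B) ≤ P(C)) with P(∅) = 0, P(X) = 1, and weakly 𝒯-invariant, i.e. P(T⁻¹(B)) ≥ P(B) for all B ∈ 𝒟 and T ∈ 𝒯. Then: (1) the inner set function P*, defined on all subsets A of X by P*(A) = sup { P(B) : B ∈ 𝒟, B ⊆ A }, satisfies P*(T⁻¹(A)) ≥ P*(A) for every A ⊆ X and every T ∈ 𝒯; (2) the Choquet functional C, defined on every gamble f by C(f) = inf f + ∫_{inf f}^{sup f} P*({x ∈ X : f(x) ≥ α}) dα (a Riemann integral of a bounded monotone function of α), satisfies C(f∘T) ≥ C(f) for every gamble f and every T ∈ 𝒯. -/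

import Mathlib

def IsGamble {X : Type*} (f : X → ℝ) : Prop :=
  BddAbove (Set.range f) ∧ BddBelow (Set.range f)

def IsCoherentLowerPrevision {X : Type*} (L : (X → ℝ) → ℝ) : Prop :=
  (∀ f : X → ℝ, IsGamble f → sInf (Set.range f) ≤ L f) ∧
  (∀ f g : X → ℝ, IsGamble f → IsGamble g → L f + L g ≤ L (f + g)) ∧
  (∀ f : X → ℝ, IsGamble f → ∀ c : ℝ, 0 ≤ c → L (c • f) = c * L f)

def IsCoherentPrevision {X : Type*} (P : (X → ℝ) → ℝ) : Prop :=
  (∀ f g : X → ℝ, IsGamble f → IsGamble g → P (f + g) = P f + P g) ∧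
  (∀ f : X → ℝ, IsGamble f → sInf (Set.range f) ≤ P f)

def IsTransformationMonoid {X : Type*} (𝒯 : Set (X → X)) : Prop :=
  id ∈ 𝒯 ∧ ∀ S ∈ 𝒯, ∀ T ∈ 𝒯, S ∘ T ∈ 𝒯

def Dominating {X : Type*} (L : (X → ℝ) → ℝ) : Set ((X → ℝ) → ℝ) :=
  {P | IsCoherentPrevision P ∧ ∀ f : X → ℝ, IsGamble f → L f ≤ P f}

noncomputable def innerSetFn {X : Type*} (𝒟 : Set (Set X)) (P : Set X → ℝ)
    (A : Set X) : ℝ :=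
  sSup {r : ℝ | ∃ B ∈ 𝒟, B ⊆ A ∧ r = P B}

noncomputable def choquetFn {X : Type*} (𝒟 : Set (Set X)) (P : Set X → ℝ)
    (f : X → ℝ) : ℝ :=
  sInf (Set.range f) +
    ∫ α in (sInf (Set.range f))..(sSup (Set.range f)),
      innerSetFn 𝒟 P {x | α ≤ f x}

/-!
The inner set function `P*` is weakly `T`-invariant because `B ↦ T⁻¹(B)` sends every
`𝒟`-approximant of `A` from inside to a `𝒟`-approximant of `T⁻¹(A)` with no smaller `P`-value.
For the Choquet functional, the range of `f ∘ T` lies in `[inf f, sup f]`, and outside its own range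
the superlevel sets of `f ∘ T` are `X` or `∅`; so `C(f ∘ T)` can be computed as an integral over
`[inf f, sup f]` as well, where its integrand dominates that of `C(f)` pointwise by the first part.
-/

open Set

theorem intervalIntegral.add_integral_eq_of_eq_one_of_eq_zero {g : ℝ → ℝ} (hg : Antitone g)
    {m m' M' M : ℝ} (hmm' : m ≤ m') (hM'M : M' ≤ M)
    (hg1 : ∀ α ∈ Icc m m', g α = 1) (hg0 : ∀ α ∈ Ioc M' M, g α = 0) :
    m + ∫ α in m..M, g α = m' + ∫ α in m'..M', g α := by
  have hleft : ∫ α in m..m', g α = m' - m := by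
    rw [intervalIntegral.integral_congr (g := fun _ => (1 : ℝ))
      (fun α hα => hg1 α (by rwa [uIcc_of_le hmm'] at hα))]
    simp
  have hright : ∫ α in M'..M, g α = 0 := by
    rw [intervalIntegral.integral_congr_ae (g := fun _ => (0 : ℝ))
      (Filter.Eventually.of_forall fun α hα => hg0 α (by rwa [uIoc_of_le hM'M] at hα))]
    simp
  rw [← intervalIntegral.integral_add_adjacent_intervals (b := m') hg.intervalIntegrable
      hg.intervalIntegrable,
    ← intervalIntegral.integral_add_adjacent_intervals (a := m') (b := M') hg.intervalIntegrable
      hg.intervalIntegrable, hleft, hright]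
  ring

theorem IsGamble.comp {X Y : Type*} {f : X → ℝ} (hf : IsGamble f) (T : Y → X) :
    IsGamble (f ∘ T) :=
  ⟨hf.1.mono (range_comp_subset_range T f), hf.2.mono (range_comp_subset_range T f)⟩

section innerSetFn

variable {X : Type*} {𝒟 : Set (Set X)} {P : Set X → ℝ}

theorem le_innerSetFn (hbdd : BddAbove (P '' 𝒟)) {A B : Set X} (hB : B ∈ 𝒟) (hBA : B ⊆ A) :
    P B ≤ innerSetFn 𝒟 P A := by
  obtain ⟨c, hc⟩ := hbdd
  exact le_csSup ⟨c, by rintro r ⟨B', hB', -, rfl⟩; exact hc ⟨B', hB', rfl⟩⟩ ⟨B, hB, hBA, rfl⟩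

theorem innerSetFn_le (hempty : ∅ ∈ 𝒟) {A : Set X} {c : ℝ} (h : ∀ B ∈ 𝒟, B ⊆ A → P B ≤ c) :
    innerSetFn 𝒟 P A ≤ c :=
  csSup_le ⟨P ∅, ∅, hempty, empty_subset A, rfl⟩ fun _ ⟨B, hB, hBA, hr⟩ => hr ▸ h B hB hBA

theorem innerSetFn_mono (hempty : ∅ ∈ 𝒟) (hbdd : BddAbove (P '' 𝒟)) :
    Monotone (innerSetFn 𝒟 P) := fun _ _ hAA' =>
  innerSetFn_le hempty fun _ hB hBA => le_innerSetFn hbdd hB (hBA.trans hAA')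

theorem innerSetFn_empty (hempty : ∅ ∈ 𝒟) : innerSetFn 𝒟 P ∅ = P ∅ := by
  have : {r : ℝ | ∃ B ∈ 𝒟, B ⊆ ∅ ∧ r = P B} = {P ∅} := by
    ext r
    simp only [subset_empty_iff, mem_singleton_iff]
    exact ⟨fun ⟨B, _, hB, hr⟩ => hB ▸ hr, fun hr => ⟨∅, hempty, rfl, hr⟩⟩
  rw [innerSetFn, this, csSup_singleton]

theorem innerSetFn_univ (huniv : univ ∈ 𝒟) (hle : ∀ B ∈ 𝒟, P B ≤ P univ) :
    innerSetFn 𝒟 P univ = P univ :=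
  le_antisymm
    (csSup_le ⟨P univ, univ, huniv, subset_rfl, rfl⟩ fun _ ⟨B, hB, _, hr⟩ => hr ▸ hle B hB)
    (le_innerSetFn ⟨P univ, by rintro _ ⟨B, hB, rfl⟩; exact hle B hB⟩ huniv subset_rfl)

theorem innerSetFn_le_preimage (hempty : ∅ ∈ 𝒟) (hbdd : BddAbove (P '' 𝒟)) {T : X → X}
    (hT𝒟 : ∀ B ∈ 𝒟, T ⁻¹' B ∈ 𝒟) (hTP : ∀ B ∈ 𝒟, P B ≤ P (T ⁻¹' B)) (A : Set X) :
    innerSetFn 𝒟 P A ≤ innerSetFn 𝒟 P (T ⁻¹' A) :=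
  innerSetFn_le hempty fun B hB hBA =>
    (hTP B hB).trans (le_innerSetFn hbdd (hT𝒟 B hB) (preimage_mono hBA))

theorem antitone_innerSetFn_superlevel (hmono : Monotone (innerSetFn 𝒟 P)) (f : X → ℝ) :
    Antitone fun α => innerSetFn 𝒟 P {x | α ≤ f x} :=
  fun _ _ hab => hmono fun _ hx => hab.trans hx

end innerSetFn

section choquetFn

variable {X : Type*} {𝒟 : Set (Set X)} {P : Set X → ℝ}

theorem choquetFn_eq_of_bounds (hmono : Monotone (innerSetFn 𝒟 P))
    (hempty : innerSetFn 𝒟 P ∅ = 0) (huniv : innerSetFn 𝒟 P univ = 1)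
    {f : X → ℝ} (hf : IsGamble f) {m M : ℝ} (hm : m ≤ sInf (range f)) (hM : sSup (range f) ≤ M) :
    choquetFn 𝒟 P f = m + ∫ α in m..M, innerSetFn 𝒟 P {x | α ≤ f x} := by
  refine (intervalIntegral.add_integral_eq_of_eq_one_of_eq_zero
    (antitone_innerSetFn_superlevel hmono f) hm hM ?_ ?_).symm
  · rintro α ⟨-, hα⟩
    rw [← huniv]
    congr
    exact eq_univ_of_forall fun x => hα.trans (csInf_le hf.2 ⟨x, rfl⟩)
  · rintro α ⟨hα, -⟩
    rw [← hempty]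
    congr
    exact eq_empty_of_forall_notMem fun x hx => (le_csSup hf.1 ⟨x, rfl⟩).not_gt (hα.trans_le hx)

theorem choquetFn_le_comp [Nonempty X] (hmono : Monotone (innerSetFn 𝒟 P))
    (hempty : innerSetFn 𝒟 P ∅ = 0) (huniv : innerSetFn 𝒟 P univ = 1)
    {f : X → ℝ} (hf : IsGamble f) {T : X → X}
    (hT : ∀ A, innerSetFn 𝒟 P A ≤ innerSetFn 𝒟 P (T ⁻¹' A)) :
    choquetFn 𝒟 P f ≤ choquetFn 𝒟 P (f ∘ T) := by
  have hrange : range (f ∘ T) ⊆ range f := range_comp_subset_range T f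
  rw [choquetFn_eq_of_bounds hmono hempty huniv (hf.comp T)
    (csInf_le_csInf hf.2 (range_nonempty _) hrange) (csSup_le_csSup hf.1 (range_nonempty _) hrange)]
  exact add_le_add_right (intervalIntegral.integral_mono_on
    (csInf_le_csSup (range_nonempty f) hf.2 hf.1)
    (antitone_innerSetFn_superlevel hmono f).intervalIntegrable (μ := MeasureTheory.volume)
    (antitone_innerSetFn_superlevel hmono (f ∘ T)).intervalIntegrable
    fun α _ => hT {x | α ≤ f x}) _

end choquetFn

theorem stmt12_general (X : Type*) [Nonempty X] (𝒯 : Set (X → X))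
    (𝒟 : Set (Set X)) (hempty : ∅ ∈ 𝒟) (huniv : Set.univ ∈ 𝒟)
    (hinv𝒟 : ∀ B ∈ 𝒟, ∀ T ∈ 𝒯, T ⁻¹' B ∈ 𝒟)
    (P : Set X → ℝ) (hmono : ∀ B ∈ 𝒟, ∀ C ∈ 𝒟, B ⊆ C → P B ≤ P C)
    (h0 : P ∅ = 0) (h1 : P Set.univ = 1)
    (hwk : ∀ B ∈ 𝒟, ∀ T ∈ 𝒯, P B ≤ P (T ⁻¹' B)) :
    (∀ A : Set X, ∀ T ∈ 𝒯, innerSetFn 𝒟 P A ≤ innerSetFn 𝒟 P (T ⁻¹' A)) ∧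
    (∀ f : X → ℝ, IsGamble f → ∀ T ∈ 𝒯,
      choquetFn 𝒟 P f ≤ choquetFn 𝒟 P (f ∘ T)) := by
  have hle : ∀ B ∈ 𝒟, P B ≤ P univ := fun B hB => hmono B hB _ huniv (subset_univ B)
  have hbdd : BddAbove (P '' 𝒟) := ⟨P univ, by rintro _ ⟨B, hB, rfl⟩; exact hle B hB⟩
  have hinner : ∀ A : Set X, ∀ T ∈ 𝒯, innerSetFn 𝒟 P A ≤ innerSetFn 𝒟 P (T ⁻¹' A) :=
    fun A T hT => innerSetFn_le_preimage hempty hbdd (hinv𝒟 · · T hT) (hwk · · T hT) A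
  refine ⟨hinner, fun f hf T hT => choquetFn_le_comp (innerSetFn_mono hempty hbdd) ?_ ?_ hf
    (hinner · T hT)⟩
  · rw [innerSetFn_empty hempty, h0]
  · rw [innerSetFn_univ huniv hle, h1]

theorem stmt12 (X : Type*) [Nonempty X] (𝒯 : Set (X → X))
    (h𝒯 : IsTransformationMonoid 𝒯)
    (𝒟 : Set (Set X)) (hempty : ∅ ∈ 𝒟) (huniv : Set.univ ∈ 𝒟)
    (hcup : ∀ B ∈ 𝒟, ∀ C ∈ 𝒟, B ∪ C ∈ 𝒟) (hcap : ∀ B ∈ 𝒟, ∀ C ∈ 𝒟, B ∩ C ∈ 𝒟)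
    (hinv𝒟 : ∀ B ∈ 𝒟, ∀ T ∈ 𝒯, T ⁻¹' B ∈ 𝒟)
    (P : Set X → ℝ) (hmono : ∀ B ∈ 𝒟, ∀ C ∈ 𝒟, B ⊆ C → P B ≤ P C)
    (h0 : P ∅ = 0) (h1 : P Set.univ = 1)
    (hwk : ∀ B ∈ 𝒟, ∀ T ∈ 𝒯, P B ≤ P (T ⁻¹' B)) :
    (∀ A : Set X, ∀ T ∈ 𝒯, innerSetFn 𝒟 P A ≤ innerSetFn 𝒟 P (T ⁻¹' A)) ∧
    (∀ f : X → ℝ, IsGamble f → ∀ T ∈ 𝒯,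
      choquetFn 𝒟 P f ≤ choquetFn 𝒟 P (f ∘ T)) :=
  stmt12_general X 𝒯 𝒟 hempty huniv hinv𝒟 P hmono h0 h1 hwk
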